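/- For the Kepler-related Hamiltonian H = (px²+py²+pz²)/2 + k1/r + k2/x² + k3/y² + k4/z² with r = √(x²+y²+z²), the function K_J1 = (y·pz − z·py)² + 2k3(z/y)² + 2k4(y/z)² satisfies {K_J1, H} = 0. -/

import Mathlib

noncomputable section

/-- Phase space ℝ⁶ with coordinates (x,y,z,px,py,pz). -/
abbrev Pt := Fin 6 → ℝ

/-- Standard basis vector. -/
def e (j : Fin 6) : Pt := Pi.single j 1

/-- Canonical Poisson bracket on ℝ⁶:
{F,G} = Σᵢ (∂F/∂qᵢ ∂G/∂pᵢ − ∂F/∂pᵢ ∂G/∂qᵢ). -/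
def pb (F G : Pt → ℝ) (q : Pt) : ℝ :=
    (fderiv ℝ F q (e 0)) * (fderiv ℝ G q (e 3)) - (fderiv ℝ F q (e 3)) * (fderiv ℝ G q (e 0))
  + (fderiv ℝ F q (e 1)) * (fderiv ℝ G q (e 4)) - (fderiv ℝ F q (e 4)) * (fderiv ℝ G q (e 1))
  + (fderiv ℝ F q (e 2)) * (fderiv ℝ G q (e 5)) - (fderiv ℝ F q (e 5)) * (fderiv ℝ G q (e 2))

/-- H = (px²+py²+pz²)/2 + k1/r + k2/x² + k3/y² + k4/z², r = √(x²+y²+z²). -/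
def Ham (k1 k2 k3 k4 : ℝ) (q : Pt) : ℝ :=
  (q 3 ^ 2 + q 4 ^ 2 + q 5 ^ 2) / 2 + k1 / Real.sqrt (q 0 ^ 2 + q 1 ^ 2 + q 2 ^ 2)
    + k2 / q 0 ^ 2 + k3 / q 1 ^ 2 + k4 / q 2 ^ 2

/-- K_J1 = (y pz − z py)² + 2k3 (z/y)² + 2k4 (y/z)². -/
def KJ1 (k3 k4 : ℝ) (q : Pt) : ℝ :=
  (q 1 * q 5 - q 2 * q 4) ^ 2 + 2 * k3 * (q 2 / q 1) ^ 2 + 2 * k4 * (q 1 / q 2) ^ 2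

/-! K_J1 is `L_x² + W(y, z)` with `L_x = y pz − z py` and `W = 2k3 (z/y)² + 2k4 (y/z)²`. Since `L_x`
generates rotations about the x-axis, it commutes with the kinetic energy, with `r` and with `x`;
the only surviving terms are `{L_x², k3/y² + k4/z²}` and `{W, (py² + pz²)/2}`, which cancel. -/

open ContinuousLinearMap

theorem HasFDerivAt.div {E : Type*} [NormedAddCommGroup E] [NormedSpace ℝ E]
    {f g : E → ℝ} {f' g' : E →L[ℝ] ℝ} {x : E}
    (hf : HasFDerivAt f f' x) (hg : HasFDerivAt g g' x) (hx : g x ≠ 0) :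
    HasFDerivAt (fun y => f y / g y) ((g x ^ 2)⁻¹ • (g x • f' - f x • g')) x := by
  simp only [div_eq_mul_inv]
  refine (hf.mul ((hasDerivAt_inv hx).comp_hasFDerivAt x hg)).congr_fderiv ?_
  ext v
  simp only [add_apply, smul_apply, sub_apply, smul_eq_mul, Function.comp_apply]
  field_simp
  ring

theorem pb_eq_of_hasFDerivAt {F G : Pt → ℝ} {a b : Fin 6 → ℝ} {q : Pt}
    (hF : HasFDerivAt F (∑ i, a i • (proj i : Pt →L[ℝ] ℝ)) q)
    (hG : HasFDerivAt G (∑ i, b i • (proj i : Pt →L[ℝ] ℝ)) q) :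
    pb F G q = a 0 * b 3 - a 3 * b 0 + a 1 * b 4 - a 4 * b 1 + a 2 * b 5 - a 5 * b 2 := by
  simp [pb, hF.fderiv, hG.fderiv, e, Pi.single_apply]

theorem hasFDerivAt_KJ1 (k3 k4 : ℝ) {q : Pt} (hy : q 1 ≠ 0) (hz : q 2 ≠ 0) :
    let L := q 1 * q 5 - q 2 * q 4
    HasFDerivAt (KJ1 k3 k4) (∑ i, ![0,
      2 * L * q 5 - 4 * k3 * q 2 ^ 2 / q 1 ^ 3 + 4 * k4 * q 1 / q 2 ^ 2,
      -2 * L * q 4 + 4 * k3 * q 2 / q 1 ^ 2 - 4 * k4 * q 1 ^ 2 / q 2 ^ 3,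
      0, -2 * L * q 2, 2 * L * q 1] i • (proj i : Pt →L[ℝ] ℝ)) q := by
  have hp (i : Fin 6) : HasFDerivAt (fun p : Pt => p i) (proj i : Pt →L[ℝ] ℝ) q :=
    hasFDerivAt_apply i q
  refine ((((hp 1).mul (hp 5)).sub ((hp 2).mul (hp 4))).pow 2 |>.add
    ((((hp 2).div (hp 1) hy).pow 2).const_mul (2 * k3)) |>.add
    ((((hp 1).div (hp 2) hz).pow 2).const_mul (2 * k4))).congr_fderiv ?_
  ext v
  simp only [Fin.sum_univ_six, Pi.sub_apply, Pi.mul_apply, add_apply, sub_apply, smul_apply,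
    proj_apply, smul_eq_mul, nsmul_eq_mul, Nat.add_one_sub_one, pow_one, Matrix.cons_val]
  field_simp
  ring

theorem hasFDerivAt_Ham (k1 k2 k3 k4 : ℝ) {q : Pt} (hx : q 0 ≠ 0) (hy : q 1 ≠ 0) (hz : q 2 ≠ 0) :
    let r := √(q 0 ^ 2 + q 1 ^ 2 + q 2 ^ 2)
    HasFDerivAt (Ham k1 k2 k3 k4) (∑ i, ![
      -k1 * q 0 / r ^ 3 - 2 * k2 / q 0 ^ 3,
      -k1 * q 1 / r ^ 3 - 2 * k3 / q 1 ^ 3,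
      -k1 * q 2 / r ^ 3 - 2 * k4 / q 2 ^ 3,
      q 3, q 4, q 5] i • (proj i : Pt →L[ℝ] ℝ)) q := by
  intro r
  have hp (i : Fin 6) : HasFDerivAt (fun p : Pt => p i) (proj i : Pt →L[ℝ] ℝ) q :=
    hasFDerivAt_apply i q
  have hs : 0 < q 0 ^ 2 + q 1 ^ 2 + q 2 ^ 2 := by positivity
  have hr : 0 < r := Real.sqrt_pos.mpr hs
  have kinetic := (((hp 3).pow 2).add ((hp 4).pow 2)).add ((hp 5).pow 2) |>.div
    (hasFDerivAt_const 2 q) two_ne_zero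
  have radial := (hasFDerivAt_const k1 q).div
    (((((hp 0).pow 2).add ((hp 1).pow 2)).add ((hp 2).pow 2)).sqrt hs.ne') hr.ne'
  have centrifugal (c : ℝ) (i : Fin 6) (hi : q i ≠ 0) :=
    (hasFDerivAt_const c q).div ((hp i).pow 2) (pow_ne_zero 2 hi)
  refine (kinetic.add radial |>.add (centrifugal k2 0 hx) |>.add (centrifugal k3 1 hy)
    |>.add (centrifugal k4 2 hz)).congr_fderiv ?_
  ext v
  simp only [Fin.sum_univ_six, Pi.add_apply, add_apply, sub_apply, smul_apply, zero_apply,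
    proj_apply, smul_eq_mul, nsmul_eq_mul, Nat.add_one_sub_one, pow_one, Matrix.cons_val]
  field_simp
  ring

theorem stmt14 (k1 k2 k3 k4 : ℝ) :
    ∀ q : Pt, q 0 ≠ 0 → q 1 ≠ 0 → q 2 ≠ 0 →
      pb (KJ1 k3 k4) (Ham k1 k2 k3 k4) q = 0 := by
  intro q hx hy hz
  rw [pb_eq_of_hasFDerivAt (hasFDerivAt_KJ1 k3 k4 hy hz) (hasFDerivAt_Ham k1 k2 k3 k4 hx hy hz)]
  simp only [Matrix.cons_val]
  field_simp
  ring
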